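/- arXiv:cs/0402003 — 7 statements merged into one kernel-verified Lean document; each statement's English description precedes it below -/
import Mathlib

section
/- Let φ : α → α → Prop be reflexive and symmetric (modeling the conjunction φ_F of a set F of functional dependencies, so that an instance satisfies F iff all pairs of its tuples satisfy φ). Then winnow is redundant with respect to F — i.e., ω(r) = r for every finite instance r all of whose pairs of tuples satisfy φ — if and only if the formula φ(t1,t2) ∧ t1 ≻ t2 is unsatisfiable, i.e., there exist no tuples t1, t2 with φ(t1,t2) and t1 ≻ t2. -/
open Classical in
noncomputable def winnow {α : Type*} (succ : α → α → Prop) (r : Finset α) : Finset α :=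
  r.filter (fun t => ¬ ∃ t' ∈ r, succ t' t)

theorem stmt_1 {α : Type*} (succ : α → α → Prop) (φ : α → α → Prop)
    (hrefl : ∀ x, φ x x) (hsymm : ∀ x y, φ x y → φ y x) :
    (∀ r : Finset α, (∀ t1 ∈ r, ∀ t2 ∈ r, φ t1 t2) → winnow succ r = r) ↔
      ¬ ∃ t1 t2, φ t1 t2 ∧ succ t1 t2 := by
  classical
  constructor
  · rintro h ⟨t1, t2, hφ, hs⟩
    have hr := h {t1, t2} ?_
    · have ht2 : t2 ∈ winnow succ ({t1, t2} : Finset α) := by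
        rw [hr]; simp
      rw [winnow, Finset.mem_filter] at ht2
      exact ht2.2 ⟨t1, by simp, hs⟩
    · intro a ha b hb
      simp only [Finset.mem_insert, Finset.mem_singleton] at ha hb
      rcases ha with rfl | rfl <;> rcases hb with rfl | rfl
      · exact hrefl _
      · exact hφ
      · exact hsymm _ _ hφ
      · exact hrefl _
  · intro h r hr
    rw [winnow, Finset.filter_eq_self]
    rintro t ht ⟨t', ht', hs⟩
    exact h ⟨t', t, hr t' ht' t ht, hs⟩
end

section
/- Let ≻ be an irreflexive preference relation on α and let φ : α → α → Prop be reflexive and symmetric (modeling a functional dependency f, so that an instance satisfies f iff all pairs of its tuples satisfy φ). Then the formula t1 ∼ t2 ∧ ¬φ(t1,t2) is unsatisfiable (there are no tuples t1, t2 with t1 ∼ t2 and ¬φ(t1,t2)) if and only if for every finite instance r, the winnow ω(r) satisfies f, i.e., ∀ t1 t2 ∈ ω(r), φ(t1,t2). -/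
theorem stmt_3 {α : Type*} (succ : α → α → Prop) (φ : α → α → Prop)
    (hirr : ∀ x, ¬ succ x x)
    (hrefl : ∀ x, φ x x) (hsymm : ∀ x y, φ x y → φ y x) :
    (¬ ∃ t1 t2, (¬ succ t1 t2 ∧ ¬ succ t2 t1) ∧ ¬ φ t1 t2) ↔
      ∀ r : Finset α, ∀ t1 ∈ winnow succ r, ∀ t2 ∈ winnow succ r, φ t1 t2 := by
  classical
  constructor
  · intro h r t1 h1 t2 h2
    simp only [winnow, Finset.mem_filter] at h1 h2
    by_contra hphi
    exact h ⟨t1, t2, ⟨fun hs => h2.2 ⟨t1, h1.1, hs⟩, fun hs => h1.2 ⟨t2, h2.1, hs⟩⟩, hphi⟩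
  · intro h ⟨t1, t2, ⟨h12, h21⟩, hphi⟩
    apply hphi
    have := h {t1, t2}
    simp only [winnow, Finset.mem_filter, Finset.mem_insert, Finset.mem_singleton] at this
    apply this t1 ⟨Or.inl rfl, ?_⟩ t2 ⟨Or.inr rfl, ?_⟩
    · rintro ⟨t', ht' | ht', hs⟩ <;> subst ht'
      · exact hirr _ hs
      · exact h21 hs
    · rintro ⟨t', ht' | ht', hs⟩ <;> subst ht'
      · exact h12 hs
      · exact hirr _ hs
end

section
/- Let ≻ be an irreflexive preference relation on α and let P : Finset α → Prop model a constraint-generating dependency f (P r holds iff instance r satisfies f). Then f is entailed by the dependency d₂ᶜ — i.e., every finite instance r with ∀ t1 t2 ∈ r, t1 ∼ t2 satisfies P r — if and only if for every finite instance r, the winnow ω(r) satisfies f, i.e., P (ω(r)) holds. -/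
theorem stmt_6 {α : Type*} (succ : α → α → Prop) (P : Finset α → Prop)
    (hirr : ∀ x, ¬ succ x x) :
    (∀ r : Finset α, (∀ t1 ∈ r, ∀ t2 ∈ r, ¬ succ t1 t2 ∧ ¬ succ t2 t1) → P r) ↔
      (∀ r : Finset α, P (winnow succ r)) := by
  constructor
  · intro h r
    apply h
    intro t1 h1 t2 h2
    simp only [winnow, Finset.mem_filter] at h1 h2
    exact ⟨fun hs => h2.2 ⟨t1, h1.1, hs⟩, fun hs => h1.2 ⟨t2, h2.1, hs⟩⟩
  · intro h r hind
    classical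
    have : winnow succ r = r := by
      rw [winnow]
      apply Finset.filter_true_of_mem
      rintro t ht ⟨t', ht', hs⟩
      exact (hind t' ht' t ht).1 hs
    rw [← this]
    exact h r
end

section
/- If a preference relation ≻ on α is a weak order, r : Finset α is a finite instance, and t0 ∈ ω(r), then the winnow ω(r) equals the set of all tuples of r indifferent to t0, i.e., ω(r) = {t ∈ r | t0 ∼ t}. (This justifies the single-pass algorithm WWO, which keeps only one top tuple and its bucket of indifferent tuples.) -/
open Classical in
theorem stmt_10 {α : Type*} (succ : α → α → Prop)
    (hirr : ∀ x, ¬ succ x x) (htrans : ∀ x y z, succ x y → succ y z → succ x z)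
    (hnegtrans : ∀ x y z, ¬ succ x y → ¬ succ y z → ¬ succ x z)
    (r : Finset α) (t0 : α) (ht0 : t0 ∈ winnow succ r) :
    winnow succ r = r.filter (fun t => ¬ succ t0 t ∧ ¬ succ t t0) := by
  simp only [winnow, Finset.mem_filter] at ht0
  obtain ⟨ht0r, ht0max⟩ := ht0
  push_neg at ht0max
  ext t
  simp only [winnow, Finset.mem_filter]
  constructor
  · rintro ⟨htr, hmax⟩
    push_neg at hmax
    exact ⟨htr, hmax t0 ht0r, ht0max t htr⟩
  · rintro ⟨htr, h1, h2⟩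
    refine ⟨htr, ?_⟩
    rintro ⟨t', ht'r, ht'⟩
    exact hnegtrans t' t0 t (ht0max t' ht'r) h1 ht'
end

section
/- Let ≻ be a weak order on α, and define the WWO step function on pairs (top, B) : α × List α and input tuple t by: if top ≻ t then (top, B); else if t ≻ top then (t, [t]); else (top, t :: B). Then for every nonempty list l : List α with head h and tail l', the fold of the step function over l' starting from (h, [h]) yields a pair (top, B) such that the set of elements of B equals the winnow ω of the set of elements of l, and top is in that winnow. -/
open Classical in
noncomputable def wwoStep {α : Type*} (succ : α → α → Prop) (p : α × List α) (t : α) :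
    α × List α :=
  if succ p.1 t then p
  else if succ t p.1 then (t, [t])
  else (p.1, t :: p.2)

section Aux

set_option linter.unusedSectionVars false

variable {α : Type*} [DecidableEq α] {succ : α → α → Prop}

lemma mem_winnow {r : Finset α} {a : α} :
    a ∈ winnow succ r ↔ a ∈ r ∧ ∀ t' ∈ r, ¬ succ t' a := by
  simp [winnow]

lemma step_inv (hirr : ∀ x, ¬ succ x x)
    (htrans : ∀ x y z, succ x y → succ y z → succ x z)
    (hnegtrans : ∀ x y z, ¬ succ x y → ¬ succ y z → ¬ succ x z)
    {top : α} {B : List α} {r : Finset α} (t : α)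
    (hB : B.toFinset = winnow succ r) (htop : top ∈ winnow succ r) :
    (wwoStep succ (top, B) t).2.toFinset = winnow succ (insert t r) ∧
      (wwoStep succ (top, B) t).1 ∈ winnow succ (insert t r) := by
  obtain ⟨htopr, htopmax⟩ := mem_winnow.mp htop
  unfold wwoStep
  have hcontra : ∀ x y z, succ x z → succ x y ∨ succ y z := by
    intro x y z hxz
    by_contra hc
    push_neg at hc
    exact hnegtrans x y z hc.1 hc.2 hxz
  by_cases h1 : succ top t
  · simp only [h1, if_pos]
    have hwin : winnow succ (insert t r) = winnow succ r := by
      ext s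
      simp only [mem_winnow, Finset.mem_insert]
      constructor
      · rintro ⟨hs | hs, hmax⟩
        · exact (hmax top (Or.inr htopr) (hs ▸ h1)).elim
        · exact ⟨hs, fun t' ht' => hmax t' (Or.inr ht')⟩
      · rintro ⟨hs, hmax⟩
        refine ⟨Or.inr hs, ?_⟩
        intro t' ht' hts
        rcases ht' with h3 | h3
        · rcases hcontra t' top s hts with h' | h'
          · exact hirr top (htrans top t' top (h3 ▸ h1) h')
          · exact hmax top htopr h'
        · exact hmax t' h3 hts
    rw [hwin]
    exact ⟨hB, htop⟩
  · by_cases h2 : succ t top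
    · simp only [h1, if_neg, not_false_iff, h2, if_pos]
      have htall : ∀ s ∈ r, succ t s := by
        intro s hs
        rcases hcontra t s top h2 with h' | h'
        · exact h'
        · exact absurd h' (htopmax s hs)
      have hwin : winnow succ (insert t r) = {t} := by
        ext s
        simp only [mem_winnow, Finset.mem_insert, Finset.mem_singleton]
        constructor
        · rintro ⟨hs | hs, hmax⟩
          · exact hs
          · exact absurd (htall s hs) (hmax t (Or.inl rfl))
        · intro hst
          refine ⟨Or.inl hst, ?_⟩
          intro t' ht' h'
          rcases ht' with h3 | h3
          · rw [h3, hst] at h'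
            exact hirr t h'
          · rw [hst] at h'
            exact hirr t (htrans t t' t (htall t' h3) h')
      rw [hwin]
      simp
    · simp only [h1, if_neg, not_false_iff, h2]
      have hwin : winnow succ (insert t r) = insert t (winnow succ r) := by
        ext s
        simp only [mem_winnow, Finset.mem_insert]
        constructor
        · rintro ⟨hs | hs, hmax⟩
          · exact Or.inl hs
          · exact Or.inr ⟨hs, fun t' ht' => hmax t' (Or.inr ht')⟩
        · intro hst
          rcases hst with h0 | hs
          · refine ⟨Or.inl h0, ?_⟩
            intro t' ht' h'
            rw [h0] at h'
            rcases ht' with h3 | h3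
            · rw [h3] at h'
              exact hirr t h'
            · rcases hcontra t' top t h' with h'' | h''
              · exact htopmax t' h3 h''
              · exact h1 h''
          · obtain ⟨hs, hmax⟩ := hs
            refine ⟨Or.inr hs, ?_⟩
            intro t' ht' h'
            rcases ht' with h3 | h3
            · rw [h3] at h'
              rcases hcontra t top s h' with h'' | h''
              · exact h2 h''
              · exact hmax top htopr h''
            · exact hmax t' h3 h'
      rw [hwin]
      constructor
      · rw [List.toFinset_cons, hB]
      · rw [Finset.mem_insert]
        exact Or.inr htop

lemma fold_inv (hirr : ∀ x, ¬ succ x x)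
    (htrans : ∀ x y z, succ x y → succ y z → succ x z)
    (hnegtrans : ∀ x y z, ¬ succ x y → ¬ succ y z → ¬ succ x z) :
    ∀ (l : List α) (top : α) (B : List α) (r : Finset α),
      B.toFinset = winnow succ r → top ∈ winnow succ r →
      (List.foldl (wwoStep succ) (top, B) l).2.toFinset = winnow succ (r ∪ l.toFinset) ∧
        (List.foldl (wwoStep succ) (top, B) l).1 ∈ winnow succ (r ∪ l.toFinset) := by
  intro l
  induction l with
  | nil => intro top B r hB htop; simpa using ⟨hB, htop⟩
  | cons t l ih =>
    intro top B r hB htop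
    obtain ⟨h1, h2⟩ := step_inv hirr htrans hnegtrans t hB htop
    have := ih (wwoStep succ (top, B) t).1 (wwoStep succ (top, B) t).2 (insert t r) h1 h2
    have hset : insert t r ∪ l.toFinset = r ∪ (t :: l).toFinset := by
      ext s; simp [or_assoc, or_left_comm, or_comm]
    rw [hset] at this
    simpa using this

end Aux

theorem stmt_11 {α : Type*} [DecidableEq α] (succ : α → α → Prop)
    (hirr : ∀ x, ¬ succ x x) (htrans : ∀ x y z, succ x y → succ y z → succ x z)
    (hnegtrans : ∀ x y z, ¬ succ x y → ¬ succ y z → ¬ succ x z)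
    (h : α) (l' : List α) :
    (List.foldl (wwoStep succ) (h, [h]) l').2.toFinset
        = winnow succ (h :: l').toFinset ∧
      (List.foldl (wwoStep succ) (h, [h]) l').1 ∈ winnow succ (h :: l').toFinset := by
  have hwin : winnow succ ({h} : Finset α) = {h} := by
    ext s
    simp only [mem_winnow, Finset.mem_singleton]
    constructor
    · exact fun hs => hs.1
    · intro h1
      refine ⟨h1, ?_⟩
      intro t' ht' hs
      rw [ht', h1] at hs
      exact hirr h hs
  have hbase : ({h} : List α).toFinset = winnow succ ({h} : Finset α) := by
    rw [hwin]; ext s; rw [Finset.mem_singleton]; exact List.mem_toFinset.trans List.mem_singleton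
  have hbase2 : h ∈ winnow succ ({h} : Finset α) := by
    rw [hwin]; exact Finset.mem_singleton_self h
  have := fold_inv hirr htrans hnegtrans l' h [h] {h} hbase hbase2
  have hset : ({h} : Finset α) ∪ l'.toFinset = (h :: l').toFinset := by
    ext s; simp
  rw [hset] at this
  exact this
end

section
/- There is no scoring function f : ℕ × ℕ × ℚ → ℝ that captures the preference relation ≻_{C1}, i.e., no f such that for all Book tuples t1, t2, t1 ≻_{C1} t2 ↔ f(t1) > f(t2). -/
def succC1 (t t' : ℕ × ℕ × ℚ) : Prop := t.1 = t'.1 ∧ t.2.2 < t'.2.2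

theorem stmt_14 :
    ¬ ∃ f : ℕ × ℕ × ℚ → ℝ, ∀ t1 t2, succC1 t1 t2 ↔ f t1 > f t2 := by
  rintro ⟨f, hf⟩
  have a : ℕ × ℕ × ℚ := (0, 0, 0)
  have h1 : f (0,0,(0:ℚ)) > f (0,0,(2:ℚ)) := (hf _ _).mp ⟨rfl, by norm_num⟩
  have h2 : ¬ f (0,0,(0:ℚ)) > f (1,0,(1:ℚ)) := fun h => by
    have := (hf _ _).mpr h; exact absurd this.1 (by norm_num)
  have h3 : ¬ f (1,0,(1:ℚ)) > f (0,0,(0:ℚ)) := fun h => by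
    have := (hf _ _).mpr h; exact absurd this.1 (by norm_num)
  have h4 : ¬ f (1,0,(1:ℚ)) > f (0,0,(2:ℚ)) := fun h => by
    have := (hf _ _).mpr h; exact absurd this.1 (by norm_num)
  have h5 : ¬ f (0,0,(2:ℚ)) > f (1,0,(1:ℚ)) := fun h => by
    have := (hf _ _).mpr h; exact absurd this.1 (by norm_num)
  linarith [le_antisymm (not_lt.mp h2) (not_lt.mp h3), le_antisymm (not_lt.mp h4) (not_lt.mp h5)]
end

section
/- The functional dependency ISBN → Price holds in the result of ω_{C1} for every input: for every finite instance r of Book tuples and all tuples (i,v,p), (i',v',p') ∈ ω_{C1}(r), if i = i' then p = p' (even though r itself need not satisfy this dependency). -/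
theorem stmt_17 (r : Finset (ℕ × ℕ × ℚ)) :
    ∀ t1 ∈ winnow succC1 r, ∀ t2 ∈ winnow succC1 r, t1.1 = t2.1 → t1.2.2 = t2.2.2 := by
  intro t1 h1 t2 h2 hi
  simp only [winnow, Finset.mem_filter] at h1 h2
  by_contra hne
  rcases lt_or_gt_of_ne hne with h | h
  · exact h2.2 ⟨t1, h1.1, hi, h⟩
  · exact h1.2 ⟨t2, h2.1, hi.symm, h⟩
end
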